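/- arXiv:2401.04512 — 3 statements merged into one kernel-verified Lean document; each statement's English description precedes it below -/
import Mathlib

section
/- In the intersection bounds model, suppose $\bar Y_i = Y_i + \eta_i^+$ and $\underline Y_i = Y_i + \eta_i^-$ with $E[Y_i | Z_i = z] = E[Y_i]$ for all $z \in [z_l,z_u]$. Then the deviation $m(G) = (\sup_z E[\eta_i^-|Z_i=z])_+ + (-\inf_z E[\eta_i^+|Z_i=z])_+$ satisfies $m(G) \ge (\sup_z E[\underline Y_i|Z_i=z] - \inf_z E[\bar Y_i|Z_i=z])_+$, with equality achievable; i.e., the minimal deviation needed to rationalize the observed conditional means is $(\sup_z E[\underline Y_i|Z_i=z] - \inf_z E[\bar Y_i|Z_i=z])_+$. -/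
open Set

lemma sSup_sub_const (A : Set ℝ) (h : A.Nonempty) (hb : BddAbove A) (θ : ℝ) :
    sSup ((fun x => x - θ) '' A) = sSup A - θ := by
  have := (OrderIso.subRight θ).map_csSup' h hb
  simpa using this.symm

lemma sInf_sub_const (A : Set ℝ) (h : A.Nonempty) (hb : BddBelow A) (θ : ℝ) :
    sInf ((fun x => x - θ) '' A) = sInf A - θ := by
  have := (OrderIso.subRight θ).map_csInf' h hb
  simpa using this.symm

/-- In the intersection bounds model, with `bbar z = E[Ȳ|Z=z]`,
`bund z = E[Y̲|Z=z]` and `θ = E[Y]` (so `E[η⁺|Z=z] = bbar z - θ` and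
`E[η⁻|Z=z] = bund z - θ`), the deviation
`m(θ) = (sup_z (bund z - θ))₊ + (-(inf_z (bbar z - θ)))₊` satisfies
`m(θ) ≥ (sup_z bund z - inf_z bbar z)₊` for every `θ`, with equality achieved
by some `θ`. -/
theorem intersection_bounds_minimal_deviation
    (zl zu : ℝ) (hz : zl ≤ zu) (bbar bund : ℝ → ℝ)
    (h1 : BddAbove (bund '' Set.Icc zl zu)) (h2 : BddBelow (bund '' Set.Icc zl zu))
    (h3 : BddAbove (bbar '' Set.Icc zl zu)) (h4 : BddBelow (bbar '' Set.Icc zl zu)) :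
    (∀ θ : ℝ,
      max (sSup (bund '' Set.Icc zl zu) - sInf (bbar '' Set.Icc zl zu)) 0 ≤
        max (sSup ((fun z => bund z - θ) '' Set.Icc zl zu)) 0 +
          max (-(sInf ((fun z => bbar z - θ) '' Set.Icc zl zu))) 0) ∧
    (∃ θ : ℝ,
      max (sSup ((fun z => bund z - θ) '' Set.Icc zl zu)) 0 +
          max (-(sInf ((fun z => bbar z - θ) '' Set.Icc zl zu))) 0 =
        max (sSup (bund '' Set.Icc zl zu) - sInf (bbar '' Set.Icc zl zu)) 0) := by
  have hne : (Set.Icc zl zu).Nonempty := ⟨zl, le_refl zl, hz⟩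
  have hneU : (bund '' Set.Icc zl zu).Nonempty := hne.image _
  have hneB : (bbar '' Set.Icc zl zu).Nonempty := hne.image _
  have key : ∀ θ : ℝ,
      sSup ((fun z => bund z - θ) '' Set.Icc zl zu) = sSup (bund '' Set.Icc zl zu) - θ ∧
      sInf ((fun z => bbar z - θ) '' Set.Icc zl zu) = sInf (bbar '' Set.Icc zl zu) - θ := by
    intro θ
    constructor
    · have : (fun z => bund z - θ) '' Set.Icc zl zu
          = (fun x => x - θ) '' (bund '' Set.Icc zl zu) := by
        rw [Set.image_image]
      rw [this, sSup_sub_const _ hneU h1]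
    · have : (fun z => bbar z - θ) '' Set.Icc zl zu
          = (fun x => x - θ) '' (bbar '' Set.Icc zl zu) := by
        rw [Set.image_image]
      rw [this, sInf_sub_const _ hneB h4]
  set S := sSup (bund '' Set.Icc zl zu)
  set I := sInf (bbar '' Set.Icc zl zu)
  constructor
  · intro θ
    rw [(key θ).1, (key θ).2]
    have h5 : S - I = (S - θ) + (θ - I) := by ring
    have h6 : -(I - θ) = θ - I := by ring
    rw [h6]
    rcases le_total (S - θ) 0 with h | h <;> rcases le_total (θ - I) 0 with h' | h'
    · rw [max_eq_right h, max_eq_right h', max_eq_right (by linarith : S - I ≤ 0)]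
      linarith
    · rw [max_eq_right h, max_eq_left h']
      rcases le_total (S - I) 0 with hh | hh
      · rw [max_eq_right hh]; linarith
      · rw [max_eq_left hh]; linarith
    · rw [max_eq_left h, max_eq_right h']
      rcases le_total (S - I) 0 with hh | hh
      · rw [max_eq_right hh]; linarith
      · rw [max_eq_left hh]; linarith
    · rw [max_eq_left h, max_eq_left h']
      rcases le_total (S - I) 0 with hh | hh
      · rw [max_eq_right hh]; linarith
      · rw [max_eq_left hh]; linarith
  · refine ⟨max S I, ?_⟩
    rw [(key (max S I)).1, (key (max S I)).2]
    rcases le_total S I with h | h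
    · rw [max_eq_right h]
      have : max (S - I) 0 = 0 := max_eq_right (by linarith)
      simp [this]
    · rw [max_eq_left h]
      have h0 : max (S - S) 0 = 0 := by simp
      have h1' : -(I - S) = S - I := by ring
      rw [h0, h1', max_eq_left (by linarith : (0:ℝ) ≤ S - I), zero_add]
end

section
/- Let $\bar b, \underline b : [z_l,z_u] \to \mathbb{R}$ be bounded functions (the conditional means of the upper and lower bound variables) and for $\theta \in \mathbb{R}$ define $m(\theta) = (\sup_z (\underline b(z) - \theta))_+ + (\sup_z (\theta - \bar b(z)))_+$. Then for any $m \ge (\sup_z \underline b(z) - \inf_z \bar b(z))_+$, the set $\{\theta : m(\theta) \le m\}$ equals the interval $[\sup_z \underline b(z) - m, \; \inf_z \bar b(z) + m]$. -/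
open Set

lemma sSup_sub_const' (s : Set ℝ) (hne : s.Nonempty) (hbd : BddAbove s) (c : ℝ) :
    sSup ((fun x => x - c) '' s) = sSup s - c := by
  apply le_antisymm
  · apply csSup_le (hne.image _)
    rintro y ⟨x, hx, rfl⟩
    exact sub_le_sub_right (le_csSup hbd hx) c
  · rw [sub_le_iff_le_add]
    apply csSup_le hne
    intro x hx
    rw [← sub_le_iff_le_add]
    have hbA : BddAbove ((fun x => x - c) '' s) := by
      obtain ⟨L, hL⟩ := hbd
      exact ⟨L - c, by rintro y ⟨a, ha, rfl⟩; exact sub_le_sub_right (hL ha) c⟩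
    exact le_csSup hbA ⟨x, hx, rfl⟩

lemma sSup_const_sub' (s : Set ℝ) (hne : s.Nonempty) (hbd : BddBelow s) (c : ℝ) :
    sSup ((fun x => c - x) '' s) = c - sInf s := by
  have hbA : BddAbove ((fun x => c - x) '' s) := by
    obtain ⟨L, hL⟩ := hbd
    exact ⟨c - L, by rintro y ⟨x, hx, rfl⟩; exact sub_le_sub_left (hL hx) c⟩
  apply le_antisymm
  · apply csSup_le (hne.image _)
    rintro y ⟨x, hx, rfl⟩
    exact sub_le_sub_left (csInf_le hbd hx) c
  · rw [sub_le_iff_le_add, ← sub_le_iff_le_add']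
    apply le_csInf hne
    intro x hx
    rw [sub_le_iff_le_add, ← sub_le_iff_le_add']
    exact le_csSup hbA ⟨x, hx, rfl⟩

/-- For `m ≥ (sup bund - inf bbar)₊`, the set of `θ` with deviation
`m(θ) = (sup_z (bund z - θ))₊ + (sup_z (θ - bbar z))₊ ≤ m` is exactly the interval
`[sup bund - m, inf bbar + m]`. -/
theorem intersection_bounds_identified_interval
    (zl zu : ℝ) (hz : zl ≤ zu) (bbar bund : ℝ → ℝ)
    (h1 : BddAbove (bund '' Set.Icc zl zu)) (h2 : BddBelow (bund '' Set.Icc zl zu))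
    (h3 : BddAbove (bbar '' Set.Icc zl zu)) (h4 : BddBelow (bbar '' Set.Icc zl zu))
    (m : ℝ)
    (hm : max (sSup (bund '' Set.Icc zl zu) - sInf (bbar '' Set.Icc zl zu)) 0 ≤ m) :
    {θ : ℝ |
        max (sSup ((fun z => bund z - θ) '' Set.Icc zl zu)) 0 +
          max (sSup ((fun z => θ - bbar z) '' Set.Icc zl zu)) 0 ≤ m} =
      Set.Icc (sSup (bund '' Set.Icc zl zu) - m) (sInf (bbar '' Set.Icc zl zu) + m) := by
  have hS : (Set.Icc zl zu).Nonempty := Set.nonempty_Icc.2 hz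
  have hneU : (bund '' Set.Icc zl zu).Nonempty := hS.image _
  have hneB : (bbar '' Set.Icc zl zu).Nonempty := hS.image _
  set A := sSup (bund '' Set.Icc zl zu) with hA
  set B := sInf (bbar '' Set.Icc zl zu) with hB
  have hAB : max (A - B) 0 ≤ m := hm
  ext θ
  have e1 : sSup ((fun z => bund z - θ) '' Set.Icc zl zu) = A - θ := by
    rw [show (fun z => bund z - θ) '' Set.Icc zl zu
        = (fun x => x - θ) '' (bund '' Set.Icc zl zu) by rw [Set.image_image]]
    exact sSup_sub_const' _ hneU h1 θ
  have e2 : sSup ((fun z => θ - bbar z) '' Set.Icc zl zu) = θ - B := by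
    rw [show (fun z => θ - bbar z) '' Set.Icc zl zu
        = (fun x => θ - x) '' (bbar '' Set.Icc zl zu) by rw [Set.image_image]]
    exact sSup_const_sub' _ hneB h4 θ
  simp only [Set.mem_setOf_eq, Set.mem_Icc, e1, e2]
  rw [max_le_iff] at hAB
  obtain ⟨hABm, hm0⟩ := hAB
  constructor
  · intro h
    constructor
    · nlinarith [le_max_left (A - θ) 0, le_max_right (θ - B) 0]
    · nlinarith [le_max_left (θ - B) 0, le_max_right (A - θ) 0]
  · rintro ⟨hl, hr⟩
    rcases le_or_gt (A - θ) 0 with h1' | h1' <;> rcases le_or_gt (θ - B) 0 with h2' | h2'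
    · rw [max_eq_right h1', max_eq_right h2']; linarith
    · rw [max_eq_right h1', max_eq_left h2'.le]; linarith
    · rw [max_eq_left h1'.le, max_eq_right h2']; linarith
    · rw [max_eq_left h1'.le, max_eq_left h2'.le]; linarith
end

section
/- Consider the set $D$ of weakly decreasing probability density functions on $[a,b]$ (nonnegative, weakly decreasing, integrating to 1). Every step function of the form $f_c(x) = \frac{1}{c}\mathbf{1}(a \le x \le a + c)$ for $0 < c \le b-a$ is an extreme point of $D$: if $f_c = \alpha g + (1-\alpha) h$ with $g, h \in D$ and $\alpha \in (0,1)$, then $g = f_c = h$ almost everywhere. -/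
open MeasureTheory Set

/-!
On `[a, a + c]` the combination `α g + (1 - α) h` is constant while both summands are antitone,
so neither can drop below its value at `a`: `g` is constant there. Off `[a, a + c]` the
combination vanishes while both summands are nonnegative, so `g` vanishes there. Hence `g` is a
multiple of `1_{[a, a + c]}`, and `∫ g = 1` fixes the multiple to be `1 / c`; likewise for `h`.
-/

lemma eq_of_mul_add_mul_eq_of_le {K : Type*} [Field K] [LinearOrder K] [IsStrictOrderedRing K]
    {α β x y x₀ y₀ : K} (hα : 0 < α) (hβ : 0 ≤ β) (hx : x ≤ x₀) (hy : y ≤ y₀)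
    (h : α * x + β * y = α * x₀ + β * y₀) : x = x₀ := by
  have hβy : β * y ≤ β * y₀ := mul_le_mul_of_nonneg_left hy hβ
  have hαx : α * x = α * x₀ := le_antisymm (mul_le_mul_of_nonneg_left hx hα.le) (by linarith)
  exact mul_left_cancel₀ hα.ne' hαx

lemma eqOn_indicator_of_mul_add_mul_eq_indicator {ι : Type*} [Preorder ι] {a b d : ι}
    {v α β : ℝ} {g h : ι → ℝ} (hα : 0 < α) (hβ : 0 ≤ β)
    (hg0 : ∀ x ∈ Icc a b, 0 ≤ g x) (hgmono : AntitoneOn g (Icc a b))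
    (hh0 : ∀ x ∈ Icc a b, 0 ≤ h x) (hhmono : AntitoneOn h (Icc a b))
    (heq : ∀ x ∈ Icc a b, (Icc a d).indicator (fun _ => v) x = α * g x + β * h x) :
    EqOn g ((Icc a d).indicator fun _ => g a) (Icc a b) := by
  intro x hx
  by_cases hxd : x ∈ Icc a d
  · have ha : a ∈ Icc a b := ⟨le_rfl, hxd.1.trans hx.2⟩
    have had : a ∈ Icc a d := ⟨le_rfl, hxd.1.trans hxd.2⟩
    rw [indicator_of_mem hxd]
    refine eq_of_mul_add_mul_eq_of_le hα hβ (hgmono ha hx hx.1) (hhmono ha hx hx.1) ?_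
    rw [← heq x hx, ← heq a ha, indicator_of_mem hxd, indicator_of_mem had]
  · rw [indicator_of_notMem hxd]
    refine (eq_of_mul_add_mul_eq_of_le hα hβ (hg0 x hx) (hh0 x hx) ?_).symm
    rw [← heq x hx, indicator_of_notMem hxd]
    ring

lemma setIntegral_Icc_indicator_Icc_const {a b c : ℝ} (hc : 0 ≤ c) (hcb : c ≤ b - a) (k : ℝ) :
    ∫ x in Icc a b, (Icc a (a + c)).indicator (fun _ => k) x = c * k := by
  have hsub : Icc a (a + c) ⊆ Icc a b := Icc_subset_Icc le_rfl (by linarith)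
  rw [setIntegral_indicator measurableSet_Icc, inter_eq_right.mpr hsub, setIntegral_const,
    measureReal_def, Real.volume_Icc, add_sub_cancel_left, ENNReal.toReal_ofReal hc, smul_eq_mul]

lemma eqOn_step_of_mul_add_mul_eq_step {a b c α β : ℝ} {g h : ℝ → ℝ}
    (hc : 0 < c) (hcb : c ≤ b - a) (hα : 0 < α) (hβ : 0 ≤ β)
    (hg0 : ∀ x ∈ Icc a b, 0 ≤ g x) (hgmono : AntitoneOn g (Icc a b))
    (hgint : ∫ x in Icc a b, g x = 1)
    (hh0 : ∀ x ∈ Icc a b, 0 ≤ h x) (hhmono : AntitoneOn h (Icc a b))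
    (heq : ∀ x ∈ Icc a b, (Icc a (a + c)).indicator (fun _ => 1 / c) x = α * g x + β * h x) :
    EqOn g ((Icc a (a + c)).indicator fun _ => 1 / c) (Icc a b) := by
  have hg := eqOn_indicator_of_mul_add_mul_eq_indicator hα hβ hg0 hgmono hh0 hhmono heq
  have hga : g a = 1 / c := by
    rw [eq_div_iff hc.ne', mul_comm, ← hgint, setIntegral_congr_fun measurableSet_Icc hg,
      setIntegral_Icc_indicator_Icc_const hc.le hcb]
  rwa [hga] at hg

/-- Each step density `f_c = (1/c)·1_{[a, a+c]}` with `0 < c ≤ b - a`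
is an extreme point of the convex set of weakly decreasing probability densities on
`[a, b]`: any representation as a nontrivial convex combination of two such densities
forces both to equal `f_c` almost everywhere on `[a,b]`. -/
theorem step_density_extreme_point
    (a b c : ℝ) (hc : 0 < c) (hcb : c ≤ b - a)
    (g h : ℝ → ℝ) (α : ℝ) (hα : α ∈ Set.Ioo (0 : ℝ) 1)
    (hg0 : ∀ x ∈ Set.Icc a b, 0 ≤ g x) (hgmono : AntitoneOn g (Set.Icc a b))
    (hgint : (∫ x in Set.Icc a b, g x) = 1)
    (hh0 : ∀ x ∈ Set.Icc a b, 0 ≤ h x) (hhmono : AntitoneOn h (Set.Icc a b))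
    (hhint : (∫ x in Set.Icc a b, h x) = 1)
    (heq : ∀ x ∈ Set.Icc a b,
      Set.indicator (Set.Icc a (a + c)) (fun _ => 1 / c) x = α * g x + (1 - α) * h x) :
    (∀ᵐ x ∂(volume.restrict (Set.Icc a b)),
        g x = Set.indicator (Set.Icc a (a + c)) (fun _ => 1 / c) x) ∧
    (∀ᵐ x ∂(volume.restrict (Set.Icc a b)),
        h x = Set.indicator (Set.Icc a (a + c)) (fun _ => 1 / c) x) := by
  obtain ⟨hα0, hα1⟩ := hα
  have hg := eqOn_step_of_mul_add_mul_eq_step hc hcb hα0 (sub_nonneg.2 hα1.le)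
    hg0 hgmono hgint hh0 hhmono heq
  have hh := eqOn_step_of_mul_add_mul_eq_step hc hcb (sub_pos.2 hα1) hα0.le
    hh0 hhmono hhint hg0 hgmono fun x hx => (heq x hx).trans (add_comm _ _)
  exact ⟨ae_restrict_of_forall_mem measurableSet_Icc hg,
    ae_restrict_of_forall_mem measurableSet_Icc hh⟩
end
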